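/- Let S be a numerical semigroup with multiplicity e and blowup B. Then the adjustment set adj(S) = {s − ord(s;S)·e : s ∈ S} is a finite set satisfying Ap(B; e) ⊆ adj(S) ⊆ B. -/

import Mathlib

open Finset

/-- The set of factorizations of `n` over the generating tuple `g`. -/
def Fac {t : ℕ} (g : Fin (t + 1) → ℕ) (n : ℕ) : Set (Fin (t + 1) → ℕ) :=
  {c | ∑ i, c i * g i = n}

/-- The numerical semigroup generated by the tuple `g`. -/
def Sg {t : ℕ} (g : Fin (t + 1) → ℕ) : Set ℕ :=
  {n | ∃ c : Fin (t + 1) → ℕ, ∑ i, c i * g i = n}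

/-- The order of `n`: the maximal length of a factorization of `n` over `g`. -/
noncomputable def ordOf {t : ℕ} (g : Fin (t + 1) → ℕ) (n : ℕ) : ℕ :=
  sSup {r | ∃ c ∈ Fac g n, ∑ i, c i = r}

/-- The minimal length of a factorization of `n` over `g`. -/
noncomputable def minordOf {t : ℕ} (g : Fin (t + 1) → ℕ) (n : ℕ) : ℕ :=
  sInf {r | ∃ c ∈ Fac g n, ∑ i, c i = r}

/-- The denumerant of `n` with respect to `g`. -/
noncomputable def denum {t : ℕ} (g : Fin (t + 1) → ℕ) (n : ℕ) : ℕ :=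
  (Fac g n).ncard

/-- The maximal denumerant of an element: the number of maximal-length factorizations. -/
noncomputable def dmaxEl {t : ℕ} (g : Fin (t + 1) → ℕ) (n : ℕ) : ℕ :=
  {c ∈ Fac g n | ∑ i, c i = ordOf g n}.ncard

/-- The maximal denumerant of the semigroup generated by `g`. -/
noncomputable def dmax {t : ℕ} (g : Fin (t + 1) → ℕ) : ℕ :=
  sSup {m | ∃ n ∈ Sg g, dmaxEl g n = m}

/-- The generating tuple `D` of the blowup: `{e, a₁ - e, …, a_t - e}`. -/
def blowD {t : ℕ} (g : Fin (t + 1) → ℕ) : Fin (t + 1) → ℕ :=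
  fun i => if i = 0 then g 0 else g i - g 0

/-- The adjustment of `n`:  `n - ord(n) * e`. -/
noncomputable def adj {t : ℕ} (g : Fin (t + 1) → ℕ) (n : ℕ) : ℕ :=
  n - ordOf g n * g 0

/-- The Apery set with respect to `u` of the semigroup generated by `g`. -/
def Ap {t : ℕ} (g : Fin (t + 1) → ℕ) (u : ℕ) : Set ℕ :=
  {w ∈ Sg g | ¬ ∃ b ∈ Sg g, w = b + u}

/-- `g` is the (strictly increasing) minimal generating tuple of a numerical semigroup
with multiplicity `g 0`. -/
structure IsNumSgp {t : ℕ} (g : Fin (t + 1) → ℕ) : Prop where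
  mono : StrictMono g
  pos : 0 < g 0
  gcd_eq_one : Finset.gcd Finset.univ g = 1
  minimal : ∀ i, ∀ c : Fin (t + 1) → ℕ, ∑ j, c j * g j = g i → c = Pi.single i 1

/-- `S` is additive: `ord(u + e) = ord(u) + 1` for all `u ∈ S`. -/
def IsAdditive {t : ℕ} (g : Fin (t + 1) → ℕ) : Prop :=
  ∀ u ∈ Sg g, ordOf g (u + g 0) = ordOf g u + 1

/-- Membership of an integer in a set of naturals. -/
def ZMem (T : Set ℕ) (z : ℤ) : Prop := 0 ≤ z ∧ z.toNat ∈ T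

/-- The Frobenius number: the largest integer not in `T`. -/
noncomputable def Frob (T : Set ℕ) : ℤ := sSup {z : ℤ | ¬ ZMem T z}

/-- `T` is symmetric: whenever `x + y = F(T)`, exactly one of `x`, `y` lies in `T`. -/
def Symm (T : Set ℕ) : Prop := ∀ x y : ℤ, x + y = Frob T → (ZMem T x ↔ ¬ ZMem T y)

/-- An abstract numerical semigroup. -/
structure IsNumSemigroup (T : Set ℕ) : Prop where
  zero_mem : 0 ∈ T
  add_mem : ∀ a ∈ T, ∀ b ∈ T, a + b ∈ T
  cofinite : Tᶜ.Finite

/-- The Apery set of an abstract numerical semigroup. -/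
def ApS (T : Set ℕ) (u : ℕ) : Set ℕ := {w ∈ T | ¬ ∃ b ∈ T, w = b + u}

/-!
Write a maximal-length factorization of `s ∈ S` as `s = ∑ cᵢ aᵢ`; since `aᵢ = (aᵢ - e) + e`, this
gives `s = b + ord(s) e` with `b ∈ B`, so `adj(s) = b ∈ B`. Conversely, write `w ∈ Ap(B; e)` over
`e, a₁ - e, …`: the coefficient of `e` vanishes because `w - e ∉ B`, and lifting the coefficients to
`S` gives `s = w + r e` with a factorization of length `r`. A longer one would give
`s = b + R e` with `b ∈ B`, `R > r`, hence `w - e ∈ B`; so `ord(s) = r` and `adj(s) = w`.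
For finiteness, `ord(m + k e) ≥ ord(m) + k`, so `adj` does not increase along `m + ℕ e`, and
`adj(S)` is bounded by the least elements of `S` in the residue classes modulo `e`.
-/

section Semigroup

variable {t : ℕ}

section Factorizations

variable {h : Fin (t + 1) → ℕ}

@[simp]
lemma mem_Fac {n : ℕ} {c : Fin (t + 1) → ℕ} : c ∈ Fac h n ↔ ∑ i, c i * h i = n := Iff.rfl

lemma Sg.add_mem {a b : ℕ} (ha : a ∈ Sg h) (hb : b ∈ Sg h) : a + b ∈ Sg h := by
  obtain ⟨c, rfl⟩ := ha
  obtain ⟨c', rfl⟩ := hb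
  exact ⟨c + c', by simp [add_mul, Finset.sum_add_distrib]⟩

lemma Sg.mul_mem (k : ℕ) {a : ℕ} (ha : a ∈ Sg h) : k * a ∈ Sg h := by
  obtain ⟨c, rfl⟩ := ha
  exact ⟨k • c, by simp [Finset.mul_sum, mul_assoc]⟩

lemma Sg.gen_mem (i : Fin (t + 1)) : h i ∈ Sg h :=
  ⟨Pi.single i 1, by simp [Pi.single_apply]⟩

lemma sum_update_zero_mul_add (c : Fin (t + 1) → ℕ) :
    ∑ i, Function.update c 0 0 i * h i + c 0 * h 0 = ∑ i, c i * h i := by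
  simp only [Fin.sum_univ_succ, Function.update_self, ne_eq, Fin.succ_ne_zero,
    not_false_eq_true, Function.update_of_ne]
  ring

lemma le_of_mem_Ap_of_add_mul_eq {u w P k R : ℕ} (hu : u ∈ Sg h) (hw : w ∈ Ap h u)
    (hP : P ∈ Sg h) (heq : w + k * u = P + R * u) : R ≤ k := by
  by_contra! hkR
  obtain ⟨j, rfl⟩ := Nat.exists_eq_add_of_lt hkR
  refine hw.2 ⟨P + j * u, Sg.add_mem hP (Sg.mul_mem j hu), ?_⟩
  linarith

end Factorizations

section Order

variable {g : Fin (t + 1) → ℕ}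

lemma sum_le_of_mem_Fac (hg : ∀ i, 0 < g i) {n : ℕ} {c : Fin (t + 1) → ℕ}
    (hc : c ∈ Fac g n) : ∑ i, c i ≤ n := by
  rw [← hc]
  exact Finset.sum_le_sum fun i _ => Nat.le_mul_of_pos_right _ (hg i)

lemma bddAbove_factorization_lengths (hg : ∀ i, 0 < g i) (n : ℕ) :
    BddAbove {r | ∃ c ∈ Fac g n, ∑ i, c i = r} := by
  refine ⟨n, ?_⟩
  rintro _ ⟨c, hc, rfl⟩
  exact sum_le_of_mem_Fac hg hc

lemma le_ordOf (hg : ∀ i, 0 < g i) {n : ℕ} {c : Fin (t + 1) → ℕ} (hc : c ∈ Fac g n) :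
    ∑ i, c i ≤ ordOf g n :=
  le_csSup (bddAbove_factorization_lengths hg n) ⟨c, hc, rfl⟩

lemma exists_mem_Fac_sum_eq_ordOf (hg : ∀ i, 0 < g i) {n : ℕ} (hn : n ∈ Sg g) :
    ∃ c ∈ Fac g n, ∑ i, c i = ordOf g n := by
  obtain ⟨c, hc⟩ := hn
  have hne : {r | ∃ c ∈ Fac g n, ∑ i, c i = r}.Nonempty := ⟨_, c, hc, rfl⟩
  exact Nat.sSup_mem hne (bddAbove_factorization_lengths hg n)

lemma ordOf_add_le_ordOf_add_mul (hg : ∀ i, 0 < g i) {m : ℕ} (hm : m ∈ Sg g) (k : ℕ) :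
    ordOf g m + k ≤ ordOf g (m + k * g 0) := by
  obtain ⟨c, hc, hlen⟩ := exists_mem_Fac_sum_eq_ordOf hg hm
  have hfac : c + Pi.single 0 k ∈ Fac g (m + k * g 0) := by
    simpa [add_mul, Finset.sum_add_distrib, Pi.single_apply] using hc
  simpa [Finset.sum_add_distrib, hlen] using le_ordOf hg hfac

lemma adj_add_mul_le (hg : ∀ i, 0 < g i) {m : ℕ} (hm : m ∈ Sg g) (k : ℕ) :
    adj g (m + k * g 0) ≤ adj g m := by
  have hord := Nat.mul_le_mul_right (g 0) (ordOf_add_le_ordOf_add_mul hg hm k)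
  calc adj g (m + k * g 0) ≤ m + k * g 0 - (ordOf g m + k) * g 0 := Nat.sub_le_sub_left hord _
    _ = adj g m := by rw [add_mul, Nat.add_sub_add_right]; rfl

lemma adj_le_of_modEq (hg : ∀ i, 0 < g i) {m n : ℕ} (hm : m ∈ Sg g) (hmn : m ≤ n)
    (hmod : m ≡ n [MOD g 0]) : adj g n ≤ m := by
  obtain ⟨k, hk⟩ := (Nat.modEq_iff_dvd' hmn).mp hmod
  calc adj g n = adj g (m + k * g 0) := by rw [mul_comm, ← hk, Nat.add_sub_cancel' hmn]
    _ ≤ adj g m := adj_add_mul_le hg hm k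
    _ ≤ m := Nat.sub_le _ _

lemma finite_image_adj (hg : ∀ i, 0 < g i) : (adj g '' Sg g).Finite := by
  set least : ℕ → ℕ := fun v => sInf {s | s ∈ Sg g ∧ s % g 0 = v}
  refine (Set.finite_Iic ((Finset.range (g 0)).sup least)).subset ?_
  rintro _ ⟨n, hn, rfl⟩
  have hleast : least (n % g 0) ∈ {s | s ∈ Sg g ∧ s % g 0 = n % g 0} :=
    Nat.sInf_mem ⟨n, hn, rfl⟩
  calc adj g n ≤ least (n % g 0) := adj_le_of_modEq hg hleast.1 (Nat.sInf_le ⟨hn, rfl⟩) hleast.2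
    _ ≤ _ := Finset.le_sup (Finset.mem_range.mpr (Nat.mod_lt n (hg 0)))

end Order

section Blowup

variable {g : Fin (t + 1) → ℕ}

lemma blowD_zero : blowD g 0 = g 0 := if_pos rfl

lemma sum_mul_eq_sum_update_mul_blowD_add (hmin : ∀ i, g 0 ≤ g i) (c : Fin (t + 1) → ℕ) :
    ∑ i, c i * g i = ∑ i, Function.update c 0 0 i * blowD g i + (∑ i, c i) * g 0 := by
  simp only [Fin.sum_univ_succ, Function.update_self, ne_eq, Fin.succ_ne_zero,
    not_false_eq_true, Function.update_of_ne, blowD, ↓reduceIte, add_mul, Finset.sum_mul]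
  rw [zero_mul, zero_add, ← add_assoc, add_comm _ (c 0 * g 0), add_assoc, ← Finset.sum_add_distrib]
  congr 1
  refine Finset.sum_congr rfl fun j _ => ?_
  rw [← Nat.mul_add, Nat.sub_add_cancel (hmin _)]

lemma adj_mem_Sg_blowD (hmin : ∀ i, g 0 ≤ g i) (hg : ∀ i, 0 < g i) {n : ℕ} (hn : n ∈ Sg g) :
    adj g n ∈ Sg (blowD g) := by
  obtain ⟨c, hc, hlen⟩ := exists_mem_Fac_sum_eq_ordOf hg hn
  have hsplit := sum_mul_eq_sum_update_mul_blowD_add hmin c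
  rw [mem_Fac.mp hc, hlen] at hsplit
  exact ⟨Function.update c 0 0, (Nat.sub_eq_of_eq_add hsplit).symm⟩

lemma Ap_blowD_subset_image_adj (hmin : ∀ i, g 0 ≤ g i) (hg : ∀ i, 0 < g i) :
    Ap (blowD g) (g 0) ⊆ adj g '' Sg g := by
  intro w hw
  obtain ⟨d, hd⟩ := hw.1
  have he : g 0 ∈ Sg (blowD g) := blowD_zero (g := g) ▸ Sg.gen_mem 0
  have hd0 : d 0 = 0 := by
    refine Nat.le_zero.mp (le_of_mem_Ap_of_add_mul_eq he hw ⟨Function.update d 0 0, rfl⟩ ?_)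
    rw [zero_mul, add_zero, ← hd, ← sum_update_zero_mul_add, blowD_zero]
  have hsplit := sum_mul_eq_sum_update_mul_blowD_add hmin d
  rw [Function.update_eq_self_iff.mpr hd0.symm, hd] at hsplit
  have hord : ordOf g (w + (∑ i, d i) * g 0) = ∑ i, d i := by
    refine le_antisymm ?_ (le_ordOf hg hsplit)
    obtain ⟨c, hc, hlen⟩ := exists_mem_Fac_sum_eq_ordOf hg ⟨d, hsplit⟩
    have hmax := sum_mul_eq_sum_update_mul_blowD_add hmin c
    rw [mem_Fac.mp hc, hlen] at hmax
    exact le_of_mem_Ap_of_add_mul_eq he hw ⟨_, rfl⟩ hmax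
  refine ⟨_, ⟨d, hsplit⟩, ?_⟩
  rw [adj, hord, Nat.add_sub_cancel]

end Blowup

end Semigroup

/-- Corollary 3.6: `adj(S)` is finite and `Ap(B;e) ⊆ adj(S) ⊆ B`. -/
theorem stmt6 {t : ℕ} (g : Fin (t + 1) → ℕ) (hS : IsNumSgp g) :
    (adj g '' Sg g).Finite ∧
      Ap (blowD g) (g 0) ⊆ adj g '' Sg g ∧
      adj g '' Sg g ⊆ Sg (blowD g) := by
  have hmin : ∀ i, g 0 ≤ g i := fun i => hS.mono.monotone (Fin.zero_le i)
  have hg : ∀ i, 0 < g i := fun i => hS.pos.trans_le (hmin i)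
  refine ⟨finite_image_adj hg, Ap_blowD_subset_image_adj hmin hg, ?_⟩
  rintro _ ⟨n, hn, rfl⟩
  exact adj_mem_Sg_blowD hmin hg hn
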